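/- Let F be a set of blue points, let 1 ≤ k ≤ |F|, and suppose that the weight of F_k is δ−1 at time t and δ at time t+1. Then the transposition τ_{t+1} swaps some point f of F with a point x not in F, and moreover: either (i) τ_{t+1} moves f to the left and x is red, in which case τ_{t+1} is balanced and in π^t there are exactly k−1 points of F strictly to the left of the transposed pair; or (ii) τ_{t+1} moves f to the right and x is a blue point not in F. -/

import Mathlib

open Finset

/-- An allowable sequence on `n` points (the points are the elements of `Fin n`).
`pos t x` is the position (from left to right, `0`-based) of point `x`
in the linear ordering `π^t`. -/
structure AllowableSeq (n : ℕ) where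
  pos : ℤ → Equiv.Perm (Fin n)
  adj : ∀ t : ℤ, ∃ p q : Fin n,
    ((pos t q : ℕ) = (pos t p : ℕ) + 1) ∧
    pos (t + 1) = (Equiv.swap p q).trans (pos t)
  rev : ∀ t : ℤ, pos (t + (n.choose 2 : ℤ)) = (pos t).trans Fin.revPerm

namespace AllowableSeq

variable {n : ℕ}

/-- The weight of a point: `+1` for blue, `-1` for red. -/
def wt (blue : Fin n → Bool) (x : Fin n) : ℤ := if blue x then 1 else -1

/-- The transposition `τ_{t+1}` (leading from `π^t` to `π^{t+1}`) swaps the points `p` and `q`. -/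
def SwapsAt (A : AllowableSeq n) (t : ℤ) (p q : Fin n) : Prop :=
  p ≠ q ∧ A.pos (t + 1) = (Equiv.swap p q).trans (A.pos t)

/-- `τ_{t+1}` is a balanced transposition swapping `p` and `q`: one of them is blue and the
other red, and the total weight of the points strictly to the left of the adjacent
pair in `π^t` equals `δ`. -/
def BalancedSwap (A : AllowableSeq n) (blue : Fin n → Bool) (δ : ℤ) (t : ℤ)
    (p q : Fin n) : Prop :=
  A.SwapsAt t p q ∧ (blue p ↔ ¬ blue q) ∧
  (∑ x : Fin n, if (A.pos t x : ℕ) < min (A.pos t p : ℕ) (A.pos t q : ℕ)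
      then wt blue x else 0) = δ

/-- The set of unordered pairs of points swapped by some balanced transposition of the
allowable sequence; its cardinality is the number of distinct balanced transpositions. -/
def balancedPairs (A : AllowableSeq n) (blue : Fin n → Bool) (δ : ℤ) : Set (Sym2 (Fin n)) :=
  { s | ∃ p q t, s = s(p, q) ∧ A.BalancedSwap blue δ t p q }

/-- A curve: a map `ℤ → Fin n` that is periodic with period `2 * C(n,2)`. -/
def IsCurve (A : AllowableSeq n) (γ : ℤ → Fin n) : Prop :=
  ∀ t : ℤ, γ (t + 2 * (n.choose 2 : ℤ)) = γ t

/-- The weight of a curve `γ` at time `t`: the sum of the weights of the points lying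
strictly to the left of `γ t` in `π^t`. -/
def cweight (A : AllowableSeq n) (blue : Fin n → Bool) (γ : ℤ → Fin n) (t : ℤ) : ℤ :=
  ∑ x : Fin n, if A.pos t x < A.pos t (γ t) then wt blue x else 0

/-- `γ` is the curve `Q_k` (with `k` 1-based): at every time `t`, `γ t` is the `k`-th point
of `Q` from left to right in `π^t`, i.e. `γ t ∈ Q` and exactly `k - 1` points of `Q` lie
strictly to the left of `γ t`. -/
def IsKth (A : AllowableSeq n) (Q : Finset (Fin n)) (k : ℕ) (γ : ℤ → Fin n) : Prop :=
  ∀ t : ℤ, γ t ∈ Q ∧ (Q.filter (fun x => A.pos t x < A.pos t (γ t))).card = k - 1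

/-- The mirror curve `γ̄` of `γ`, defined by `γ̄ (t + C(n,2)) = γ t`. -/
def mirror (γ : ℤ → Fin n) : ℤ → Fin n := fun t => γ (t - (n.choose 2 : ℤ))

/-- A border: a curve that is either blue and `≥δ` or red and `≤δ`, such that
(I) consecutive values are equal or have no point of the same colour between them, and
(II) it lies strictly to the left of its mirror curve. -/
def IsBorder (A : AllowableSeq n) (blue : Fin n → Bool) (δ : ℤ) (γ : ℤ → Fin n) : Prop :=
  A.IsCurve γ ∧
  (∀ t : ℤ, A.pos t (γ t) < A.pos t (mirror γ t)) ∧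
  (((∀ t : ℤ, blue (γ t) = true) ∧ (∀ t : ℤ, δ ≤ A.cweight blue γ t) ∧
      ∀ t : ℤ, γ (t + 1) = γ t ∨ ∀ x : Fin n, blue x = true →
        ¬ (min (A.pos (t+1) (γ t)) (A.pos (t+1) (γ (t+1))) < A.pos (t+1) x ∧
           A.pos (t+1) x < max (A.pos (t+1) (γ t)) (A.pos (t+1) (γ (t+1)))))
   ∨ ((∀ t : ℤ, blue (γ t) = false) ∧ (∀ t : ℤ, A.cweight blue γ t ≤ δ) ∧
      ∀ t : ℤ, γ (t + 1) = γ t ∨ ∀ x : Fin n, blue x = false →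
        ¬ (min (A.pos (t+1) (γ t)) (A.pos (t+1) (γ (t+1))) < A.pos (t+1) x ∧
           A.pos (t+1) x < max (A.pos (t+1) (γ t)) (A.pos (t+1) (γ (t+1))))))

/-- `Γ` is `⪯`-maximal among all borders: it is a border and no border lies strictly
to its right. -/
def IsMaxBorder (A : AllowableSeq n) (blue : Fin n → Bool) (δ : ℤ) (Γ : ℤ → Fin n) : Prop :=
  A.IsBorder blue δ Γ ∧
  ∀ γ : ℤ → Fin n, A.IsBorder blue δ γ → ¬ (∀ t : ℤ, A.pos t (Γ t) < A.pos t (γ t))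

/-- The curve `α` has the weight change `a ⇝ b` between the curves `lo` and `hi`:
at some time `t` its weight changes from `a` to `b`, the change occurring to the right
of `lo` and to the left of `hi`. -/
def HasChangeBetween (A : AllowableSeq n) (blue : Fin n → Bool) (a b : ℤ)
    (α lo hi : ℤ → Fin n) : Prop :=
  ∃ t : ℤ, A.cweight blue α t = a ∧ A.cweight blue α (t+1) = b ∧
    A.pos t (lo t) ≤ A.pos t (α t) ∧ A.pos (t+1) (lo (t+1)) < A.pos (t+1) (α (t+1)) ∧
    A.pos t (α t) ≤ A.pos t (hi t) ∧ A.pos (t+1) (α (t+1)) < A.pos (t+1) (hi (t+1))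

/-- The number of blue points strictly to the left of the adjacent pair `p, q` in `π^t`. -/
def blueLeftPair (A : AllowableSeq n) (blue : Fin n → Bool) (t : ℤ) (p q : Fin n) : ℕ :=
  (Finset.univ.filter (fun y => blue y = true ∧
    (A.pos t y : ℕ) < min (A.pos t p : ℕ) (A.pos t q : ℕ))).card

end AllowableSeq

open AllowableSeq

/-! An adjacent transposition of `p` (left) and `q` changes no relative order except that of
`p` and `q`. If `F_k` sits outside `{p, q}`, or jumps from one of them to the other because both
lie in `F` (and are therefore both blue), the weight of `F_k` does not change. Otherwise `F_k`
stays on its point `f ∈ {p, q}` while the other point `x ∉ F` crosses it, which changes the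
weight by `+ wt x` if `f` moves right and by `- wt x` if `f` moves left. A change from `δ - 1`
to `δ` therefore forces `x` to be blue in the first case, and red with weight `δ` to the left of
the pair in the second. -/

namespace AllowableSeq

variable {n : ℕ}

section LeftOf

variable {π : Equiv.Perm (Fin n)} {p q x z : Fin n}

def leftOf (π : Equiv.Perm (Fin n)) (z : Fin n) : Finset (Fin n) :=
  univ.filter fun x => π x < π z

theorem mem_leftOf : x ∈ leftOf π z ↔ π x < π z := by
  simp [leftOf]

theorem mem_leftOf_iff_val : x ∈ leftOf π z ↔ (π x : ℕ) < π z :=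
  mem_leftOf.trans Fin.lt_def

theorem notMem_leftOf_self : z ∉ leftOf π z :=
  fun h => (mem_leftOf.1 h).false

theorem filter_lt_eq_inter_leftOf (F : Finset (Fin n)) :
    F.filter (fun x => π x < π z) = F ∩ leftOf π z := by
  ext; simp [mem_leftOf]

theorem val_apply_ne_of_ne (π : Equiv.Perm (Fin n)) (h : x ≠ z) : (π x : ℕ) ≠ π z :=
  fun h' => h (π.injective (Fin.val_injective h'))

variable (hadj : (π q : ℕ) = π p + 1)
include hadj

theorem ne_of_adj : p ≠ q := by
  rintro rfl; omega

theorem notMem_leftOf_of_adj : q ∉ leftOf π p := by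
  rw [mem_leftOf_iff_val]; omega

theorem leftOf_eq_insert_of_adj : leftOf π q = insert p (leftOf π p) := by
  ext x
  rcases eq_or_ne x p with rfl | hxp
  · simp only [mem_leftOf_iff_val, mem_insert, true_or, iff_true]; omega
  · have := val_apply_ne_of_ne π hxp
    simp only [mem_leftOf_iff_val, mem_insert, hxp, false_or]; omega

theorem leftOf_swap_trans_of_ne (hzp : z ≠ p) (hzq : z ≠ q) :
    leftOf ((Equiv.swap p q).trans π) z = leftOf π z := by
  have := val_apply_ne_of_ne π hzp
  have := val_apply_ne_of_ne π hzq
  ext x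
  simp only [mem_leftOf_iff_val, Equiv.trans_apply, Equiv.swap_apply_of_ne_of_ne hzp hzq]
  rcases eq_or_ne x p with rfl | hxp
  · rw [Equiv.swap_apply_left]; omega
  rcases eq_or_ne x q with rfl | hxq
  · rw [Equiv.swap_apply_right]; omega
  · rw [Equiv.swap_apply_of_ne_of_ne hxp hxq]

theorem leftOf_swap_trans_left :
    leftOf ((Equiv.swap p q).trans π) p = insert q (leftOf π p) := by
  have hpq := ne_of_adj hadj
  ext x
  simp only [mem_leftOf_iff_val, mem_insert, Equiv.trans_apply, Equiv.swap_apply_left]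
  rcases eq_or_ne x p with rfl | hxp
  · simp only [Equiv.swap_apply_left, hpq, false_or]; omega
  rcases eq_or_ne x q with rfl | hxq
  · simp only [Equiv.swap_apply_right, true_or, iff_true]; omega
  · have := val_apply_ne_of_ne π hxp
    simp only [Equiv.swap_apply_of_ne_of_ne hxp hxq, hxq, false_or]; omega

theorem leftOf_swap_trans_right :
    leftOf ((Equiv.swap p q).trans π) q = leftOf π p := by
  ext x
  simp only [mem_leftOf_iff_val, Equiv.trans_apply, Equiv.swap_apply_right]
  rcases eq_or_ne x p with rfl | hxp
  · rw [Equiv.swap_apply_left]; omega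
  rcases eq_or_ne x q with rfl | hxq
  · rw [Equiv.swap_apply_right]; omega
  · rw [Equiv.swap_apply_of_ne_of_ne hxp hxq]

theorem filter_val_lt_min_eq_inter_leftOf (s : Finset (Fin n)) :
    s.filter (fun y => (π y : ℕ) < min (π q : ℕ) (π p : ℕ)) = s ∩ leftOf π p := by
  ext y
  rw [min_eq_right (by omega), mem_filter, mem_inter, mem_leftOf_iff_val]

theorem sum_ite_val_lt_min_eq_sum_leftOf (w : Fin n → ℤ) :
    (∑ y, if (π y : ℕ) < min (π q : ℕ) (π p : ℕ) then w y else 0) =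
      ∑ y ∈ leftOf π p, w y := by
  rw [← sum_filter, filter_val_lt_min_eq_inter_leftOf hadj, univ_inter]

end LeftOf

theorem card_filter_lt_injOn {α β : Type*} [LinearOrder β] {f : α → β}
    (hf : Function.Injective f) (s : Finset α) :
    Set.InjOn (fun c => #(s.filter fun x => f x < f c)) s := by
  have hmono : ∀ a ∈ s, ∀ b, f a < f b →
      #(s.filter fun x => f x < f a) < #(s.filter fun x => f x < f b) := fun a ha b hab =>
    card_lt_card <| (ssubset_iff_of_subset (monotone_filter_right s fun _ _ hx => hx.trans hab)).2
      ⟨a, mem_filter.2 ⟨ha, hab⟩, fun h => lt_irrefl _ (mem_filter.1 h).2⟩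
  intro a ha b hb hab
  rcases lt_trichotomy (f a) (f b) with h | h | h
  · exact absurd hab (hmono a ha b h).ne
  · exact hf h
  · exact absurd hab (hmono b hb a h).ne'

theorem wt_eq_one_iff {blue : Fin n → Bool} {x : Fin n} : wt blue x = 1 ↔ blue x = true := by
  cases h : blue x <;> simp [wt, h]

theorem wt_eq_neg_one_iff {blue : Fin n → Bool} {x : Fin n} :
    wt blue x = -1 ↔ blue x = false := by
  cases h : blue x <;> simp [wt, h]

theorem SwapsAt.symm {A : AllowableSeq n} {t : ℤ} {p q : Fin n} (h : A.SwapsAt t p q) :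
    A.SwapsAt t q p :=
  ⟨h.1.symm, Equiv.swap_comm p q ▸ h.2⟩

theorem cweight_eq_sum_leftOf (A : AllowableSeq n) (blue : Fin n → Bool) (γ : ℤ → Fin n)
    (s : ℤ) : A.cweight blue γ s = ∑ x ∈ leftOf (A.pos s) (γ s), wt blue x := by
  rw [cweight, leftOf, sum_filter]

theorem cweight_eq_wt_add_sum_of_adj {A : AllowableSeq n} {blue : Fin n → Bool}
    {γ : ℤ → Fin n} {t : ℤ} {p q : Fin n} (hadj : (A.pos t q : ℕ) = A.pos t p + 1)
    (hc : γ t = q) :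
    A.cweight blue γ t = wt blue p + ∑ x ∈ leftOf (A.pos t) p, wt blue x := by
  rw [cweight_eq_sum_leftOf, hc, leftOf_eq_insert_of_adj hadj,
    sum_insert notMem_leftOf_self]

namespace IsKth

variable {A : AllowableSeq n} {blue : Fin n → Bool} {F : Finset (Fin n)} {k : ℕ}
  {γ : ℤ → Fin n}

theorem card_inter_leftOf (hγ : A.IsKth F k γ) (s : ℤ) :
    #(F ∩ leftOf (A.pos s) (γ s)) = k - 1 := by
  rw [← filter_lt_eq_inter_leftOf]; exact (hγ s).2

theorem eq_of_card_inter_leftOf (hγ : A.IsKth F k γ) {s : ℤ} {c : Fin n} (hc : c ∈ F)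
    (h : #(F ∩ leftOf (A.pos s) c) = k - 1) : γ s = c :=
  card_filter_lt_injOn (A.pos s).injective F (hγ s).1 hc <| by
    simp only [filter_lt_eq_inter_leftOf, hγ.card_inter_leftOf, h]

theorem card_inter_leftOf_left_of_eq_right (hγ : A.IsKth F k γ) {t : ℤ} {p q : Fin n}
    (hadj : (A.pos t q : ℕ) = A.pos t p + 1) (hc : γ t = q) (hp : p ∉ F) :
    #(F ∩ leftOf (A.pos t) p) = k - 1 := by
  rw [← hγ.card_inter_leftOf t, hc, leftOf_eq_insert_of_adj hadj, inter_insert_of_notMem hp]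

section Transposition

variable {t : ℤ} {p q : Fin n} (hγ : A.IsKth F k γ)
  (hs : A.pos (t + 1) = (Equiv.swap p q).trans (A.pos t))
  (hadj : (A.pos t q : ℕ) = A.pos t p + 1)
include hγ hs hadj

theorem cweight_succ_of_ne_of_ne (hp : γ t ≠ p) (hq : γ t ≠ q) :
    A.cweight blue γ (t + 1) = A.cweight blue γ t := by
  have hL : leftOf (A.pos (t + 1)) (γ t) = leftOf (A.pos t) (γ t) :=
    hs ▸ leftOf_swap_trans_of_ne hadj hp hq
  have hγ' : γ (t + 1) = γ t :=
    hγ.eq_of_card_inter_leftOf (hγ t).1 (by rw [hL, hγ.card_inter_leftOf])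
  rw [cweight_eq_sum_leftOf, cweight_eq_sum_leftOf, hγ', hL]

theorem cweight_succ_of_eq_left_of_mem (hc : γ t = p) (hq : q ∈ F) :
    A.cweight blue γ (t + 1) = A.cweight blue γ t := by
  have hL : leftOf (A.pos (t + 1)) q = leftOf (A.pos t) p :=
    hs ▸ leftOf_swap_trans_right hadj
  have hγ' : γ (t + 1) = q :=
    hγ.eq_of_card_inter_leftOf hq (by rw [hL, ← hc, hγ.card_inter_leftOf])
  rw [cweight_eq_sum_leftOf, cweight_eq_sum_leftOf, hγ', hL, hc]

theorem cweight_succ_of_eq_left_of_notMem (hc : γ t = p) (hq : q ∉ F) :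
    A.cweight blue γ (t + 1) = A.cweight blue γ t + wt blue q := by
  have hL : leftOf (A.pos (t + 1)) p = insert q (leftOf (A.pos t) p) :=
    hs ▸ leftOf_swap_trans_left hadj
  have hγ' : γ (t + 1) = p :=
    hγ.eq_of_card_inter_leftOf (hc ▸ (hγ t).1)
      (by rw [hL, inter_insert_of_notMem hq, ← hc, hγ.card_inter_leftOf])
  rw [cweight_eq_sum_leftOf, cweight_eq_sum_leftOf, hγ', hL, hc,
    sum_insert (notMem_leftOf_of_adj hadj), add_comm]

theorem cweight_succ_of_eq_right_of_mem (hF : ∀ x ∈ F, blue x = true) (hc : γ t = q)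
    (hp : p ∈ F) : A.cweight blue γ (t + 1) = A.cweight blue γ t := by
  have hq : q ∈ F := hc ▸ (hγ t).1
  have hL : leftOf (A.pos (t + 1)) p = insert q (leftOf (A.pos t) p) :=
    hs ▸ leftOf_swap_trans_left hadj
  have hL₀ : leftOf (A.pos t) q = insert p (leftOf (A.pos t) p) := leftOf_eq_insert_of_adj hadj
  have hp' : p ∉ leftOf (A.pos t) p := notMem_leftOf_self
  have hq' : q ∉ leftOf (A.pos t) p := notMem_leftOf_of_adj hadj
  have hγ' : γ (t + 1) = p := by
    refine hγ.eq_of_card_inter_leftOf hp ?_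
    rw [← hγ.card_inter_leftOf t, hL, hc, hL₀, inter_insert_of_mem hp, inter_insert_of_mem hq,
      card_insert_of_notMem (fun h => hq' (mem_inter.1 h).2),
      card_insert_of_notMem (fun h => hp' (mem_inter.1 h).2)]
  rw [cweight_eq_sum_leftOf, cweight_eq_sum_leftOf, hγ', hL, hc, hL₀, sum_insert hq',
    sum_insert hp', wt, wt, hF p hp, hF q hq]

theorem cweight_succ_of_eq_right_of_notMem (hc : γ t = q) (hp : p ∉ F) :
    A.cweight blue γ (t + 1) = ∑ x ∈ leftOf (A.pos t) p, wt blue x := by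
  have hL : leftOf (A.pos (t + 1)) q = leftOf (A.pos t) p :=
    hs ▸ leftOf_swap_trans_right hadj
  have hγ' : γ (t + 1) = q := hγ.eq_of_card_inter_leftOf (hc ▸ (hγ t).1)
    (by rw [hL, hγ.card_inter_leftOf_left_of_eq_right hadj hc hp])
  rw [cweight_eq_sum_leftOf, hγ', hL]

theorem cweight_succ_eq_of_not_crossing (hF : ∀ x ∈ F, blue x = true)
    (hleft : ¬(γ t = p ∧ q ∉ F)) (hright : ¬(γ t = q ∧ p ∉ F)) :
    A.cweight blue γ (t + 1) = A.cweight blue γ t := by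
  by_cases hp : γ t = p
  · exact hγ.cweight_succ_of_eq_left_of_mem hs hadj hp (by tauto)
  by_cases hq : γ t = q
  · exact hγ.cweight_succ_of_eq_right_of_mem hs hadj hF hq (by tauto)
  exact hγ.cweight_succ_of_ne_of_ne hs hadj hp hq

end Transposition

end IsKth

end AllowableSeq

theorem up_change_detects_general (n δ : ℕ) (A : AllowableSeq n) (blue : Fin n → Bool)
    (F : Finset (Fin n)) (hF : ∀ x ∈ F, blue x = true)
    (k : ℕ)
    (γ : ℤ → Fin n) (hγ : A.IsKth F k γ) (t : ℤ)
    (h1 : A.cweight blue γ t = (δ : ℤ) - 1) (h2 : A.cweight blue γ (t+1) = (δ : ℤ)) :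
    ∃ f x : Fin n, f ∈ F ∧ x ∉ F ∧ A.SwapsAt t f x ∧
      (((A.pos t f : ℕ) = (A.pos t x : ℕ) + 1 ∧ blue x = false ∧
          A.BalancedSwap blue (δ : ℤ) t f x ∧
          (F.filter (fun y =>
            (A.pos t y : ℕ) < min (A.pos t f : ℕ) (A.pos t x : ℕ))).card = k - 1) ∨
       ((A.pos t x : ℕ) = (A.pos t f : ℕ) + 1 ∧ blue x = true)) := by
  obtain ⟨p, q, hadj, hs⟩ := A.adj t
  have hswap : A.SwapsAt t p q := ⟨ne_of_adj hadj, hs⟩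
  by_cases hleft : γ t = p ∧ q ∉ F
  · obtain ⟨hc, hq⟩ := hleft
    have hstep := hγ.cweight_succ_of_eq_left_of_notMem (blue := blue) hs hadj hc hq
    exact ⟨p, q, hc ▸ (hγ t).1, hq, hswap, Or.inr ⟨hadj, wt_eq_one_iff.1 (by omega)⟩⟩
  by_cases hright : γ t = q ∧ p ∉ F
  · obtain ⟨hc, hp⟩ := hright
    have hq : q ∈ F := hc ▸ (hγ t).1
    have hbefore := cweight_eq_wt_add_sum_of_adj (blue := blue) hadj hc
    have hafter := hγ.cweight_succ_of_eq_right_of_notMem (blue := blue) hs hadj hc hp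
    have hred : blue p = false := wt_eq_neg_one_iff.1 (by omega)
    refine ⟨q, p, hq, hp, hswap.symm,
      Or.inl ⟨hadj, hred, ⟨hswap.symm, by simp [hF q hq, hred], ?_⟩, ?_⟩⟩
    · rw [sum_ite_val_lt_min_eq_sum_leftOf hadj]; omega
    · rw [filter_val_lt_min_eq_inter_leftOf hadj,
        hγ.card_inter_leftOf_left_of_eq_right hadj hc hp]
  exact absurd (hγ.cweight_succ_eq_of_not_crossing hs hadj hF hleft hright) (by omega)

theorem up_change_detects (n b r δ : ℕ) (A : AllowableSeq n) (blue : Fin n → Bool)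
    (hn : n = b + r)
    (hb : (Finset.univ.filter (fun x => blue x = true)).card = b)
    (hr : (Finset.univ.filter (fun x => blue x = false)).card = r)
    (hbr : b = r + 2 * δ)
    (F : Finset (Fin n)) (hF : ∀ x ∈ F, blue x = true)
    (k : ℕ) (hk1 : 1 ≤ k) (hk2 : k ≤ F.card)
    (γ : ℤ → Fin n) (hγ : A.IsKth F k γ) (t : ℤ)
    (h1 : A.cweight blue γ t = (δ : ℤ) - 1) (h2 : A.cweight blue γ (t+1) = (δ : ℤ)) :
    ∃ f x : Fin n, f ∈ F ∧ x ∉ F ∧ A.SwapsAt t f x ∧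
      (((A.pos t f : ℕ) = (A.pos t x : ℕ) + 1 ∧ blue x = false ∧
          A.BalancedSwap blue (δ : ℤ) t f x ∧
          (F.filter (fun y =>
            (A.pos t y : ℕ) < min (A.pos t f : ℕ) (A.pos t x : ℕ))).card = k - 1) ∨
       ((A.pos t x : ℕ) = (A.pos t f : ℕ) + 1 ∧ blue x = true)) :=
  up_change_detects_general n δ A blue F hF k γ hγ t h1 h2
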